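/- Let m ∈ (0,1), a ∈ [−π/2, 0], and b > a. Suppose γ_o(·|m) restricted to [a,b) is injective, γ_o(a|m) = γ_o(b|m), and the unit tangents satisfy γ_o′(a|m)/|γ_o′(a|m)| = −γ_o′(b|m)/|γ_o′(b|m)|. Then a = −π/4, b = 5π/4, and m = m_H. In other words, up to scaling, reparametrization and isometries, the heart-shaped elastica is the only orbitlike embedded cuspidal elastica. -/

import Mathlib

open Real MeasureTheory Set

noncomputable section

abbrev E2 := EuclideanSpace ℝ (Fin 2)

/-- The point of the Euclidean plane with coordinates `(a, b)`. -/
def mkE2 (a b : ℝ) : E2 := WithLp.toLp 2 ![a, b]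
/-- Incomplete elliptic integral of the first kind `F(x,m)`. -/
def Fell (x m : ℝ) : ℝ := ∫ θ in (0:ℝ)..x, 1 / Real.sqrt (1 - m * Real.sin θ ^ 2)

/-- Incomplete elliptic integral of the second kind `E(x,m)`. -/
def Eell (x m : ℝ) : ℝ := ∫ θ in (0:ℝ)..x, Real.sqrt (1 - m * Real.sin θ ^ 2)

/-- Complete elliptic integral of the first kind `K(m)`. -/
def Kc (m : ℝ) : ℝ := Fell (Real.pi / 2) m

/-- Complete elliptic integral of the second kind `E(m)`. -/
def Ec (m : ℝ) : ℝ := Eell (Real.pi / 2) m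

/-- `α(m) = arcsin √(1/(2m))`. -/
def alph (m : ℝ) : ℝ := Real.arcsin (Real.sqrt (1 / (2 * m)))

/-- `G(x,m) = ∫₀ˣ (1 − 2m sin²θ)(1 − m sin²θ)^{−1/2} dθ = 2E(x,m) − F(x,m)`. -/
def Gw (x m : ℝ) : ℝ :=
  ∫ θ in (0:ℝ)..x, (1 - 2 * m * Real.sin θ ^ 2) / Real.sqrt (1 - m * Real.sin θ ^ 2)

/-- `f(m) = ∫₀^{π−α(m)} (1 − 2m sin²θ)(1 − m sin²θ)^{−1/2} dθ`; its unique zero is `m_T`. -/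
def fT (m : ℝ) : ℝ := Gw (Real.pi - alph m) m
/-- `g(m) = ∫_{−π/4}^{5π/4} (1 − 2 sin²θ)(1 − m sin²θ)^{−1/2} dθ`; its unique zero is `m_H`. -/
def gH (m : ℝ) : ℝ :=
  ∫ θ in (-(Real.pi / 4))..(5 * Real.pi / 4),
    (1 - 2 * Real.sin θ ^ 2) / Real.sqrt (1 - m * Real.sin θ ^ 2)
/-- First component of the orbitlike parametrization. -/
def gammaO1 (m : ℝ) : ℝ → ℝ := fun x => (2 * Eell x m + (m - 2) * Fell x m) / m

/-- Second component of the orbitlike parametrization. -/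
def gammaO2 (m : ℝ) : ℝ → ℝ := fun x => -2 * Real.sqrt (1 - m * Real.sin x ^ 2) / m

/-- The orbitlike parametrization `γ_o(x|m) = (1/m)(2E(x,m) + (m−2)F(x,m), −2√(1 − m sin²x))`. -/
def gammaO (m : ℝ) : ℝ → E2 := fun x => mkE2 (gammaO1 m x) (gammaO2 m x)

/-!
The unit tangent of `γ_o(·|m)` at `x` is `(cos 2x, sin 2x)`, so opposite tangents at `a` and `b`
mean `2b ≡ 2a + π (mod 2π)`, while equal heights mean `sin² a = sin² b`, i.e. `cos 2a = cos 2b`.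
Hence `cos 2a = 0`, which for `a ∈ [−π/2, 0]` gives `a = −π/4` and then `b = π/4 + nπ`, `n ∈ ℕ`.
The horizontal component `γ₁` has the even, `π`-periodic derivative
`(1 − 2 sin²θ)/√(1 − m sin²θ)`, so closing up reads `2 γ₁(π/4) + n γ₁(π) = 0` with
`γ₁(π/4) > 0`. This rules out `n = 0`; for `n = 1` it says `g(m) = 0`, and `√(2 − m) g(m)` is
strictly decreasing in `m`. For `n ≥ 2` the curve satisfies `γ_o(π − x) = γ_o(x)` whenever
`γ₁(x) = γ₁(π)/2`, and such an `x ∈ (−π/4, π/4)` exists by the intermediate value theorem,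
contradicting injectivity.
-/

lemma mkE2_eq_mkE2_iff {a b c d : ℝ} : mkE2 a b = mkE2 c d ↔ a = c ∧ b = d := by
  constructor
  · intro h
    exact ⟨by simpa [mkE2] using congrArg (· 0) h, by simpa [mkE2] using congrArg (· 1) h⟩
  · rintro ⟨rfl, rfl⟩
    rfl

lemma neg_mkE2 (a b : ℝ) : -mkE2 a b = mkE2 (-a) (-b) := by
  ext i
  fin_cases i <;> simp [mkE2]

lemma smul_mkE2 (c a b : ℝ) : c • mkE2 a b = mkE2 (c * a) (c * b) := by
  ext i
  fin_cases i <;> simp [mkE2]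

lemma norm_mkE2 (a b : ℝ) : ‖mkE2 a b‖ = √(a ^ 2 + b ^ 2) := by
  simp [EuclideanSpace.norm_eq, mkE2, Fin.sum_univ_two]

lemma hasDerivAt_mkE2 {f g : ℝ → ℝ} {f' g' x : ℝ} (hf : HasDerivAt f f' x)
    (hg : HasDerivAt g g' x) :
    HasDerivAt (fun x => mkE2 (f x) (g x)) (mkE2 f' g') x := by
  have h : HasDerivAt (fun x => (![f x, g x] : Fin 2 → ℝ)) ![f', g'] x := by
    rw [hasDerivAt_pi]
    intro i
    fin_cases i
    · simpa using hf
    · simpa using hg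
  exact ((EuclideanSpace.equiv (Fin 2) ℝ).symm.toContinuousLinearMap.hasFDerivAt
    (x := (![f x, g x] : Fin 2 → ℝ))).comp_hasDerivAt x h

lemma eq_neg_pi_div_four_of_cos_two_mul_eq_zero {a : ℝ} (h₁ : -(π / 2) ≤ a) (h₂ : a ≤ 0)
    (h : cos (2 * a) = 0) : a = -(π / 4) := by
  have := injOn_cos (x₁ := -(2 * a)) (x₂ := π / 2) ⟨by linarith, by linarith⟩
    ⟨by linarith [pi_pos], by linarith [pi_pos]⟩ (by rw [cos_neg, h, cos_pi_div_two])
  linarith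

lemma exists_nat_eq_pi_div_four_add_mul_pi {b : ℝ} (hb : -(π / 4) < b) (h : sin (2 * b) = 1) :
    ∃ n : ℕ, b = π / 4 + n * π := by
  obtain ⟨k, hk⟩ := sin_eq_one_iff.1 h
  have hk₀ : 0 ≤ k := by
    by_contra! hk'
    have : (k : ℝ) ≤ -1 := by exact_mod_cast Int.le_sub_one_of_lt hk'
    nlinarith [pi_pos]
  lift k to ℕ using hk₀
  exact ⟨k, by push_cast at hk; linarith⟩

lemma eq_neg_pi_div_four_of_opposite_tangents {a b : ℝ} (ha : a ∈ Icc (-(π / 2)) 0)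
    (hab : a < b) (hsq : sin a ^ 2 = sin b ^ 2) (hcos : cos (2 * a) = -cos (2 * b))
    (hsin : sin (2 * a) = -sin (2 * b)) : a = -(π / 4) ∧ ∃ n : ℕ, b = π / 4 + n * π := by
  have hcos₀ : cos (2 * a) = 0 := by
    rw [cos_two_mul_eq_one_sub, cos_two_mul_eq_one_sub] at hcos
    rw [cos_two_mul_eq_one_sub]
    linarith
  obtain rfl := eq_neg_pi_div_four_of_cos_two_mul_eq_zero ha.1 ha.2 hcos₀
  rw [show 2 * -(π / 4) = -(π / 2) by ring, sin_neg, sin_pi_div_two] at hsin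
  exact ⟨rfl, exists_nat_eq_pi_div_four_add_mul_pi hab (by linarith)⟩

section Orbitlike

variable {m : ℝ}

lemma one_sub_mul_pos {s : ℝ} (hm : m < 1) (hs₀ : 0 ≤ s) (hs₁ : s ≤ 1) : 0 < 1 - m * s := by
  rcases hs₁.lt_or_eq with h | rfl
  · nlinarith [mul_nonneg (sub_nonneg.2 hm.le) hs₀]
  · linarith

lemma one_sub_mul_sin_sq_pos (hm : m < 1) (θ : ℝ) : 0 < 1 - m * sin θ ^ 2 :=
  one_sub_mul_pos hm (sq_nonneg _) (sin_sq_le_one θ)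

lemma sqrt_one_sub_mul_sin_sq_pos (hm : m < 1) (θ : ℝ) : 0 < √(1 - m * sin θ ^ 2) :=
  sqrt_pos.2 (one_sub_mul_sin_sq_pos hm θ)

def gammaO1Deriv (m θ : ℝ) : ℝ := (1 - 2 * sin θ ^ 2) / √(1 - m * sin θ ^ 2)

lemma continuous_gammaO1Deriv (hm : m < 1) : Continuous (gammaO1Deriv m) :=
  (by fun_prop : Continuous fun θ => 1 - 2 * sin θ ^ 2).div (by fun_prop)
    fun θ => (sqrt_one_sub_mul_sin_sq_pos hm θ).ne'

lemma hasDerivAt_gammaO1 (hm0 : m ≠ 0) (hm1 : m < 1) (x : ℝ) :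
    HasDerivAt (gammaO1 m) (gammaO1Deriv m x) x := by
  have hE : HasDerivAt (fun x => Eell x m) (√(1 - m * sin x ^ 2)) x :=
    ((by fun_prop : Continuous fun θ => √(1 - m * sin θ ^ 2)).integral_hasStrictDerivAt
      0 x).hasDerivAt
  have hF : HasDerivAt (fun x => Fell x m) (1 / √(1 - m * sin x ^ 2)) x :=
    ((continuous_const.div (by fun_prop) fun θ => (sqrt_one_sub_mul_sin_sq_pos hm1 θ).ne' :
      Continuous fun θ => 1 / √(1 - m * sin θ ^ 2)).integral_hasStrictDerivAt 0 x).hasDerivAt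
  refine (((hE.const_mul 2).add (hF.const_mul (m - 2))).div_const m).congr_deriv ?_
  have hw := sq_sqrt (one_sub_mul_sin_sq_pos hm1 x).le
  have hs := (sqrt_one_sub_mul_sin_sq_pos hm1 x).ne'
  rw [gammaO1Deriv]
  field_simp
  linear_combination 2 * hw

lemma integral_gammaO1Deriv (hm0 : m ≠ 0) (hm1 : m < 1) (a b : ℝ) :
    ∫ θ in a..b, gammaO1Deriv m θ = gammaO1 m b - gammaO1 m a :=
  intervalIntegral.integral_eq_sub_of_hasDerivAt (fun x _ => hasDerivAt_gammaO1 hm0 hm1 x)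
    ((continuous_gammaO1Deriv hm1).intervalIntegrable a b)

lemma gammaO1_zero (m : ℝ) : gammaO1 m 0 = 0 := by
  simp [gammaO1, Eell, Fell]

lemma gammaO1Deriv_neg (m θ : ℝ) : gammaO1Deriv m (-θ) = gammaO1Deriv m θ := by
  simp [gammaO1Deriv]

lemma gammaO1_neg (hm0 : m ≠ 0) (hm1 : m < 1) (x : ℝ) : gammaO1 m (-x) = -gammaO1 m x := by
  have h := intervalIntegral.integral_comp_neg (a := 0) (b := x) (gammaO1Deriv m)
  simp only [gammaO1Deriv_neg, neg_zero] at h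
  rw [integral_gammaO1Deriv hm0 hm1, integral_gammaO1Deriv hm0 hm1,
    gammaO1_zero] at h
  linarith

lemma gammaO1Deriv_periodic (m : ℝ) : Function.Periodic (gammaO1Deriv m) π := by
  intro θ
  simp [gammaO1Deriv, sin_add_pi]

lemma gammaO1_add_pi (hm0 : m ≠ 0) (hm1 : m < 1) (x : ℝ) :
    gammaO1 m (x + π) = gammaO1 m x + gammaO1 m π := by
  have h := (gammaO1Deriv_periodic m).intervalIntegral_add_eq x 0
  rw [integral_gammaO1Deriv hm0 hm1, integral_gammaO1Deriv hm0 hm1, zero_add, gammaO1_zero] at h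
  linarith

lemma gammaO1_add_nat_mul_pi (hm0 : m ≠ 0) (hm1 : m < 1) (x : ℝ) (n : ℕ) :
    gammaO1 m (x + n * π) = gammaO1 m x + n * gammaO1 m π := by
  induction n with
  | zero => simp
  | succ n ih =>
    rw [Nat.cast_succ, add_one_mul, ← add_assoc, gammaO1_add_pi hm0 hm1, ih]
    ring

lemma gammaO1_pi_sub (hm0 : m ≠ 0) (hm1 : m < 1) (x : ℝ) :
    gammaO1 m (π - x) = gammaO1 m π - gammaO1 m x := by
  rw [sub_eq_neg_add, gammaO1_add_pi hm0 hm1, gammaO1_neg hm0 hm1]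
  ring

lemma gammaO1_pi_div_four_pos (hm0 : m ≠ 0) (hm1 : m < 1) : 0 < gammaO1 m (π / 4) := by
  have h := integral_gammaO1Deriv hm0 hm1 0 (π / 4)
  rw [gammaO1_zero, sub_zero] at h
  rw [← h]
  refine intervalIntegral.intervalIntegral_pos_of_pos_on
    ((continuous_gammaO1Deriv hm1).intervalIntegrable _ _) (fun θ hθ => ?_)
    (by linarith [pi_pos] : (0 : ℝ) < π / 4)
  refine div_pos ?_ (sqrt_one_sub_mul_sin_sq_pos hm1 θ)
  rw [← cos_two_mul_eq_one_sub]
  exact cos_pos_of_mem_Ioo ⟨by linarith [hθ.1, pi_pos], by linarith [hθ.2]⟩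

lemma continuous_gammaO1 (hm0 : m ≠ 0) (hm1 : m < 1) : Continuous (gammaO1 m) :=
  continuous_iff_continuousAt.2 fun x => (hasDerivAt_gammaO1 hm0 hm1 x).continuousAt

lemma hasDerivAt_gammaO2 (hm0 : m ≠ 0) (hm1 : m < 1) (x : ℝ) :
    HasDerivAt (gammaO2 m) (sin (2 * x) / √(1 - m * sin x ^ 2)) x := by
  have hw : HasDerivAt (fun x => 1 - m * sin x ^ 2) (-(m * sin (2 * x))) x := by
    refine ((((hasDerivAt_sin x).pow 2).const_mul m).const_sub 1).congr_deriv ?_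
    rw [sin_two_mul]
    ring
  refine (((hw.sqrt (one_sub_mul_sin_sq_pos hm1 x).ne').const_mul (-2)).div_const m).congr_deriv ?_
  have hs := (sqrt_one_sub_mul_sin_sq_pos hm1 x).ne'
  field_simp

lemma hasDerivAt_gammaO (hm0 : m ≠ 0) (hm1 : m < 1) (x : ℝ) :
    HasDerivAt (gammaO m) ((√(1 - m * sin x ^ 2))⁻¹ • mkE2 (cos (2 * x)) (sin (2 * x))) x := by
  rw [smul_mkE2, cos_two_mul_eq_one_sub, inv_mul_eq_div, inv_mul_eq_div]
  exact hasDerivAt_mkE2 (hasDerivAt_gammaO1 hm0 hm1 x) (hasDerivAt_gammaO2 hm0 hm1 x)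

lemma unit_tangent_gammaO (hm0 : m ≠ 0) (hm1 : m < 1) (x : ℝ) :
    (‖deriv (gammaO m) x‖)⁻¹ • deriv (gammaO m) x = mkE2 (cos (2 * x)) (sin (2 * x)) := by
  have hs := sqrt_one_sub_mul_sin_sq_pos hm1 x
  rw [(hasDerivAt_gammaO hm0 hm1 x).deriv, norm_smul, norm_mkE2, cos_sq_add_sin_sq, sqrt_one,
    mul_one, norm_inv, norm_of_nonneg hs.le, inv_inv, smul_smul, mul_inv_cancel₀ hs.ne', one_smul]

lemma sin_sq_eq_of_gammaO2_eq (hm0 : m ≠ 0) (hm1 : m < 1) {a b : ℝ}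
    (h : gammaO2 m a = gammaO2 m b) : sin a ^ 2 = sin b ^ 2 := by
  have h' := mul_left_cancel₀ (by norm_num : (-2 : ℝ) ≠ 0) ((div_left_inj' hm0).1 h)
  rw [sqrt_inj (one_sub_mul_sin_sq_pos hm1 a).le (one_sub_mul_sin_sq_pos hm1 b).le] at h'
  exact mul_left_cancel₀ hm0 (by linarith)

lemma gammaO_pi_sub_eq (hm0 : m ≠ 0) (hm1 : m < 1) {x : ℝ}
    (hx : gammaO1 m x = gammaO1 m π / 2) : gammaO m (π - x) = gammaO m x := by
  unfold gammaO gammaO2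
  rw [gammaO1_pi_sub hm0 hm1, hx, sin_pi_sub, sub_half]

lemma not_injOn_gammaO (hm0 : m ≠ 0) (hm1 : m < 1) {n : ℝ} (hn : 2 ≤ n)
    (hclose : 2 * gammaO1 m (π / 4) + n * gammaO1 m π = 0) :
    ¬InjOn (gammaO m) (Ico (-(π / 4)) (π / 4 + n * π)) := by
  intro hinj
  have hD := gammaO1_pi_div_four_pos hm0 hm1
  have hP : gammaO1 m π < 0 := by nlinarith
  have hmid : gammaO1 m π / 2 ∈ Ioo (gammaO1 m (-(π / 4))) (gammaO1 m (π / 4)) := by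
    rw [gammaO1_neg hm0 hm1]
    constructor <;> nlinarith
  obtain ⟨x, hx, hxP⟩ :=
    intermediate_value_Ioo (by linarith [pi_pos]) (continuous_gammaO1 hm0 hm1).continuousOn hmid
  have hnπ : 2 * π ≤ n * π := by nlinarith [pi_pos]
  have hx_eq : π - x = x := hinj ⟨by linarith [hx.2, pi_pos], by linarith [hx.1, pi_pos]⟩
    ⟨hx.1.le, by linarith [hx.2, pi_pos]⟩ (gammaO_pi_sub_eq hm0 hm1 hxP)
  linarith [hx.2, pi_pos]

lemma gH_eq_gammaO1_sub (hm0 : m ≠ 0) (hm1 : m < 1) :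
    gH m = gammaO1 m (5 * π / 4) - gammaO1 m (-(π / 4)) :=
  integral_gammaO1Deriv hm0 hm1 _ _

end Orbitlike

lemma sqrt_two_sub_mul_gH {m : ℝ} (hm : m < 1) :
    √(2 - m) * gH m = ∫ θ in (-(π / 4))..(5 * π / 4),
      (1 - 2 * sin θ ^ 2) * √((2 - m) / (1 - m * sin θ ^ 2)) := by
  rw [gH, ← intervalIntegral.integral_const_mul]
  congr 1
  ext θ
  rw [sqrt_div (by linarith)]
  ring

lemma continuous_one_sub_two_mul_sin_sq_mul_sqrt {m : ℝ} (hm : m < 1) :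
    Continuous fun θ => (1 - 2 * sin θ ^ 2) * √((2 - m) / (1 - m * sin θ ^ 2)) :=
  (by fun_prop : Continuous fun θ => 1 - 2 * sin θ ^ 2).mul
    (continuous_const.div (by fun_prop) fun θ => (one_sub_mul_sin_sq_pos hm θ).ne').sqrt

/- `∂ₘ ((2 - m) / (1 - m s)) = (2 s - 1) / (1 - m s)²` has the sign opposite to `1 - 2 s`,
so the integrand of `√(2 - m) g(m)` is pointwise antitone in `m`. -/
lemma one_sub_two_mul_mul_sqrt_div_le {s m₁ m₂ : ℝ} (hs₀ : 0 ≤ s) (hs₁ : s ≤ 1)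
    (h : m₁ ≤ m₂) (hm₂ : m₂ < 1) :
    (1 - 2 * s) * √((2 - m₂) / (1 - m₂ * s)) ≤ (1 - 2 * s) * √((2 - m₁) / (1 - m₁ * s)) := by
  have hw₁ := one_sub_mul_pos (h.trans_lt hm₂) hs₀ hs₁
  have hw₂ := one_sub_mul_pos hm₂ hs₀ hs₁
  rcases le_total s (1 / 2) with hs | hs
  · refine mul_le_mul_of_nonneg_left (sqrt_le_sqrt ?_) (by linarith)
    rw [div_le_div_iff₀ hw₂ hw₁]
    nlinarith [mul_nonneg (sub_nonneg.2 h) (sub_nonneg.2 hs)]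
  · refine mul_le_mul_of_nonpos_left (sqrt_le_sqrt ?_) (by linarith)
    rw [div_le_div_iff₀ hw₁ hw₂]
    nlinarith [mul_nonneg (sub_nonneg.2 h) (sub_nonneg.2 hs)]

lemma strictAntiOn_sqrt_two_sub_mul_gH : StrictAntiOn (fun m => √(2 - m) * gH m) (Iio 1) := by
  intro m₁ hm₁ m₂ hm₂ h
  simp only [sqrt_two_sub_mul_gH hm₁, sqrt_two_sub_mul_gH hm₂]
  refine intervalIntegral.integral_lt_integral_of_continuousOn_of_le_of_exists_lt
    (by linarith [pi_pos]) (continuous_one_sub_two_mul_sin_sq_mul_sqrt hm₂).continuousOn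
    (continuous_one_sub_two_mul_sin_sq_mul_sqrt hm₁).continuousOn
    (fun θ _ => one_sub_two_mul_mul_sqrt_div_le (sq_nonneg _) (sin_sq_le_one θ) h.le hm₂)
    ⟨0, ⟨by linarith [pi_pos], by linarith [pi_pos]⟩, ?_⟩
  simpa using sqrt_lt_sqrt (by linarith [mem_Iio.1 hm₂]) (by linarith : 2 - m₂ < 2 - m₁)

lemma eq_of_gH_eq_zero {m₁ m₂ : ℝ} (h₁ : m₁ < 1) (h₂ : m₂ < 1) (hg₁ : gH m₁ = 0)
    (hg₂ : gH m₂ = 0) : m₁ = m₂ :=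
  strictAntiOn_sqrt_two_sub_mul_gH.injOn h₁ h₂ (by simp only [hg₁, hg₂, mul_zero])

/-- Proposition 2.25, uniqueness of orbitlike ECEs: if the orbitlike
parametrization `γ_o(·|m)` restricted to `[a, b)` (with `a ∈ [−π/2, 0]`) is injective, closes up
at its endpoints and has opposite unit tangents there, then `a = −π/4`, `b = 5π/4` and
`m = m_H`; i.e. the curve is the heart-shaped elastica. -/
theorem stmt16 (mH : ℝ) (hmH : mH ∈ Set.Ioo (0:ℝ) 1) (hmHzero : gH mH = 0)
    (m a b : ℝ) (hm : m ∈ Set.Ioo (0:ℝ) 1) (ha : a ∈ Set.Icc (-(Real.pi / 2)) 0) (hab : a < b)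
    (hinj : Set.InjOn (gammaO m) (Set.Ico a b))
    (hclose : gammaO m a = gammaO m b)
    (htang : (‖deriv (gammaO m) a‖)⁻¹ • deriv (gammaO m) a =
      -((‖deriv (gammaO m) b‖)⁻¹ • deriv (gammaO m) b)) :
    a = -(Real.pi / 4) ∧ b = 5 * Real.pi / 4 ∧ m = mH := by
  have hm0 : m ≠ 0 := hm.1.ne'
  obtain ⟨hclose₁, hclose₂⟩ := mkE2_eq_mkE2_iff.1 hclose
  rw [unit_tangent_gammaO hm0 hm.2, unit_tangent_gammaO hm0 hm.2, neg_mkE2,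
    mkE2_eq_mkE2_iff] at htang
  obtain ⟨rfl, n, rfl⟩ := eq_neg_pi_div_four_of_opposite_tangents ha hab
    (sin_sq_eq_of_gammaO2_eq hm0 hm.2 hclose₂) htang.1 htang.2
  have hdisp : 2 * gammaO1 m (π / 4) + n * gammaO1 m π = 0 := by
    rw [gammaO1_neg hm0 hm.2, gammaO1_add_nat_mul_pi hm0 hm.2] at hclose₁
    linarith
  match n with
  | 0 =>
    norm_num at hdisp
    exact absurd hdisp (gammaO1_pi_div_four_pos hm0 hm.2).ne'
  | 1 =>
    have hb : π / 4 + ((1 : ℕ) : ℝ) * π = 5 * π / 4 := by push_cast; ring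
    refine ⟨rfl, hb, eq_of_gH_eq_zero hm.2 hmH.2 ?_ hmHzero⟩
    rw [gH_eq_gammaO1_sub hm0 hm.2, ← hb, hclose₁, sub_self]
  | n + 2 => exact absurd hinj (not_injOn_gammaO hm0 hm.2 (by push_cast; linarith) hdisp)
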